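/- arXiv:math-ph/0406028 — 2 statements merged into one kernel-verified Lean document; each statement's English description precedes it below -/
import Mathlib

section
/- The Barnes zeta function ζ_B(s,a) for dimension d has residue 1/(d−1)! at s = d; i.e., lim_{s→d} (s−d) · ∑_{n≥0} C(d+n−1,n)(n+a)^(−s) = 1/(d−1)! for real a > 0. -/
/-!
Write `C(d+n−1, n) = P(n)` with `P = preHilbertPoly ℝ (d−1) 0`, a polynomial of degree `d−1`
and leading coefficient `1/(d−1)!`. Expanding `P(n)` in powers of `n + a` turns `ζ_B(s,a)`
into a linear combination of the Hurwitz series `Z(s−k) = ∑ (n+a)^{−(s−k)}`, `0 ≤ k ≤ d−1`.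
Comparing `(n+a)^{−t}` with the telescoping differences of `(n+a)^{1−t}` (mean value theorem)
gives `a^{1−t} ≤ (t−1) Z(t) ≤ a^{1−t} + (t−1) a^{−t}` for `t > 1`. Hence `(t−1) Z(t) → 1` as
`t → 1⁺`, while `Z` stays bounded near any `r > 1`, so at `s = d` only the top coefficient
survives.
-/

open Filter Topology Set

theorem hasSum_sub_succ_of_antitone {f : ℕ → ℝ} {l : ℝ} (hf : Antitone f)
    (hl : Tendsto f atTop (𝓝 l)) : HasSum (fun n ↦ f n - f (n + 1)) (f 0 - l) := by
  rw [hasSum_iff_tendsto_nat_of_nonneg (fun n ↦ sub_nonneg.2 (hf n.le_succ))]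
  simpa only [Finset.sum_range_sub'] using tendsto_const_nhds.sub hl

theorem tendsto_sub_const_nhdsGT (x c : ℝ) : Tendsto (· - c) (𝓝[>] x) (𝓝[>] (x - c)) :=
  tendsto_nhdsWithin_of_tendsto_nhds_of_eventually_within _
    (((continuous_sub_right c).tendsto x).mono_left nhdsWithin_le_nhds)
    (eventually_nhdsWithin_of_forall fun _ hs ↦ sub_lt_sub_right hs c)

theorem exists_rpow_one_sub_sub_eq_mul_rpow_neg {b : ℝ} (hb : 0 < b) (t : ℝ) :
    ∃ ξ ∈ Ioo b (b + 1), b ^ (1 - t) - (b + 1) ^ (1 - t) = (t - 1) * ξ ^ (-t) := by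
  have hderiv : ∀ x ∈ Ioo b (b + 1),
      HasDerivAt (· ^ (1 - t)) ((1 - t) * x ^ (1 - t - 1)) x :=
    fun x hx ↦ Real.hasDerivAt_rpow_const (Or.inl (hb.trans hx.1).ne')
  have hcont : ContinuousOn (· ^ (1 - t)) (Icc b (b + 1)) := fun x hx ↦
    (Real.continuousAt_rpow_const _ _ (Or.inl (hb.trans_le hx.1).ne')).continuousWithinAt
  obtain ⟨ξ, hξ, hslope⟩ := exists_hasDerivAt_eq_slope _ _ (lt_add_one b) hcont hderiv
  refine ⟨ξ, hξ, ?_⟩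
  rw [add_sub_cancel_left, div_one, sub_sub_cancel_left] at hslope
  linear_combination hslope

theorem sub_one_mul_add_one_rpow_neg_le {b t : ℝ} (hb : 0 < b) (ht : 1 ≤ t) :
    (t - 1) * (b + 1) ^ (-t) ≤ b ^ (1 - t) - (b + 1) ^ (1 - t) := by
  obtain ⟨ξ, hξ, heq⟩ := exists_rpow_one_sub_sub_eq_mul_rpow_neg hb t
  rw [heq]
  exact mul_le_mul_of_nonneg_left
    (Real.rpow_le_rpow_of_nonpos (hb.trans hξ.1) hξ.2.le (by linarith)) (by linarith)

theorem rpow_one_sub_sub_le_sub_one_mul_rpow_neg {b t : ℝ} (hb : 0 < b) (ht : 1 ≤ t) :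
    b ^ (1 - t) - (b + 1) ^ (1 - t) ≤ (t - 1) * b ^ (-t) := by
  obtain ⟨ξ, hξ, heq⟩ := exists_rpow_one_sub_sub_eq_mul_rpow_neg hb t
  rw [heq]
  exact mul_le_mul_of_nonneg_left
    (Real.rpow_le_rpow_of_nonpos hb hξ.1.le (by linarith)) (by linarith)

section HurwitzSeries

variable {a : ℝ}

theorem summable_nat_add_rpow_neg (ha : 0 < a) {t : ℝ} (ht : 1 < t) :
    Summable fun n : ℕ ↦ ((n : ℝ) + a) ^ (-t) := by
  refine ((Real.summable_one_div_nat_add_rpow a t).2 ht).congr fun n ↦ ?_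
  have hpos : 0 < (n : ℝ) + a := by positivity
  rw [abs_of_pos hpos, Real.rpow_neg hpos.le, one_div]

theorem hasSum_nat_add_rpow_one_sub_sub (ha : 0 < a) {t : ℝ} (ht : 1 < t) :
    HasSum (fun n : ℕ ↦ ((n : ℝ) + a) ^ (1 - t) - ((n : ℝ) + a + 1) ^ (1 - t))
      (a ^ (1 - t)) := by
  have hanti : Antitone fun n : ℕ ↦ ((n : ℝ) + a) ^ (1 - t) := fun m n hmn ↦
    Real.rpow_le_rpow_of_nonpos (by positivity) (by gcongr) (by linarith)
  have hlim : Tendsto (fun n : ℕ ↦ ((n : ℝ) + a) ^ (1 - t)) atTop (𝓝 0) := by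
    have := tendsto_rpow_neg_atTop (y := t - 1) (by linarith)
    rw [neg_sub] at this
    exact this.comp (tendsto_atTop_add_const_right _ a tendsto_natCast_atTop_atTop)
  simpa [add_right_comm] using hasSum_sub_succ_of_antitone hanti hlim

theorem rpow_one_sub_le_sub_one_mul_tsum_nat_add_rpow_neg (ha : 0 < a) {t : ℝ} (ht : 1 < t) :
    a ^ (1 - t) ≤ (t - 1) * ∑' n : ℕ, ((n : ℝ) + a) ^ (-t) := by
  have htel := hasSum_nat_add_rpow_one_sub_sub ha ht
  rw [← htel.tsum_eq, ← tsum_mul_left]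
  exact htel.summable.tsum_le_tsum
    (fun n ↦ rpow_one_sub_sub_le_sub_one_mul_rpow_neg (by positivity) ht.le)
    ((summable_nat_add_rpow_neg ha ht).mul_left _)

theorem sub_one_mul_tsum_nat_add_rpow_neg_le (ha : 0 < a) {t : ℝ} (ht : 1 < t) :
    (t - 1) * ∑' n : ℕ, ((n : ℝ) + a) ^ (-t) ≤ a ^ (1 - t) + (t - 1) * a ^ (-t) := by
  have htel := hasSum_nat_add_rpow_one_sub_sub ha ht
  have hsplit : ∑' n : ℕ, ((n : ℝ) + a) ^ (-t) =
      a ^ (-t) + ∑' n : ℕ, ((n : ℝ) + a + 1) ^ (-t) := by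
    simpa [add_right_comm] using (summable_nat_add_rpow_neg ha ht).tsum_eq_zero_add
  have htail : (t - 1) * ∑' n : ℕ, ((n : ℝ) + a + 1) ^ (-t) ≤ a ^ (1 - t) := by
    rw [← htel.tsum_eq, ← tsum_mul_left]
    have hsum : Summable fun n : ℕ ↦ ((n : ℝ) + a + 1) ^ (-t) := by
      simpa [← add_assoc] using summable_nat_add_rpow_neg (a := a + 1) (by positivity) ht
    exact (hsum.mul_left _).tsum_le_tsum
      (fun n ↦ sub_one_mul_add_one_rpow_neg_le (by positivity) ht.le) htel.summable
  rw [hsplit, mul_add]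
  linarith

theorem tendsto_sub_one_mul_tsum_nat_add_rpow_neg (ha : 0 < a) :
    Tendsto (fun t ↦ (t - 1) * ∑' n : ℕ, ((n : ℝ) + a) ^ (-t)) (𝓝[>] 1) (𝓝 1) := by
  have hpow : Continuous fun t : ℝ ↦ a ^ t := by fun_prop (disch := exact ha.ne')
  have hlower : Tendsto (fun t : ℝ ↦ a ^ (1 - t)) (𝓝[>] 1) (𝓝 1) := by
    refine tendsto_nhdsWithin_of_tendsto_nhds ?_
    have hcont : Continuous fun t : ℝ ↦ a ^ (1 - t) := by fun_prop
    simpa using hcont.tendsto 1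
  have hupper : Tendsto (fun t : ℝ ↦ a ^ (1 - t) + (t - 1) * a ^ (-t)) (𝓝[>] 1) (𝓝 1) := by
    refine tendsto_nhdsWithin_of_tendsto_nhds ?_
    have hcont : Continuous fun t : ℝ ↦ a ^ (1 - t) + (t - 1) * a ^ (-t) := by fun_prop
    simpa using hcont.tendsto 1
  refine tendsto_of_tendsto_of_tendsto_of_le_of_le' hlower hupper ?_ ?_ <;>
    filter_upwards [self_mem_nhdsWithin] with t ht
  exacts [rpow_one_sub_le_sub_one_mul_tsum_nat_add_rpow_neg ha ht,
    sub_one_mul_tsum_nat_add_rpow_neg_le ha ht]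

theorem tendsto_sub_mul_tsum_nat_add_rpow_neg_of_one_lt (ha : 0 < a) {r : ℝ} (hr : 1 < r) :
    Tendsto (fun t ↦ (t - r) * ∑' n : ℕ, ((n : ℝ) + a) ^ (-t)) (𝓝[>] r) (𝓝 0) := by
  have hbound : ∀ t, r < t →
      ∑' n : ℕ, ((n : ℝ) + a) ^ (-t) ≤ a ^ (1 - t) / (t - 1) + a ^ (-t) := by
    intro t ht
    have ht1 : 0 < t - 1 := by linarith
    rw [div_add' _ _ _ ht1.ne', le_div_iff₀ ht1]
    linarith [sub_one_mul_tsum_nat_add_rpow_neg_le ha (t := t) (by linarith)]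
  have hupper : Tendsto (fun t ↦ (t - r) * (a ^ (1 - t) / (t - 1) + a ^ (-t)))
      (𝓝[>] r) (𝓝 0) := by
    refine tendsto_nhdsWithin_of_tendsto_nhds ?_
    have hcont :
        ContinuousAt (fun t ↦ (t - r) * (a ^ (1 - t) / (t - 1) + a ^ (-t))) r := by
      have hpow : Continuous fun t : ℝ ↦ a ^ t := by fun_prop (disch := exact ha.ne')
      have : r - 1 ≠ 0 := by linarith
      fun_prop (disch := assumption)
    simpa using hcont.tendsto
  refine tendsto_of_tendsto_of_tendsto_of_le_of_le' tendsto_const_nhds hupper ?_ ?_ <;>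
    filter_upwards [self_mem_nhdsWithin] with t (ht : r < t)
  · exact mul_nonneg (by linarith) (tsum_nonneg fun n ↦ by positivity)
  · exact mul_le_mul_of_nonneg_left (hbound t ht) (by linarith)

theorem tendsto_sub_mul_tsum_nat_add_rpow_neg_sub (ha : 0 < a) {k e : ℕ} (hk : k ≤ e) :
    Tendsto (fun s : ℝ ↦ (s - (e + 1)) * ∑' n : ℕ, ((n : ℝ) + a) ^ (-(s - k)))
      (𝓝[>] ((e : ℝ) + 1)) (𝓝 (if k = e then 1 else 0)) := by
  have hlim : Tendsto (fun t : ℝ ↦ (t - (e + 1 - k)) * ∑' n : ℕ, ((n : ℝ) + a) ^ (-t))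
      (𝓝[>] ((e : ℝ) + 1 - k)) (𝓝 (if k = e then 1 else 0)) := by
    split_ifs with hke
    · subst hke
      simpa using tendsto_sub_one_mul_tsum_nat_add_rpow_neg ha
    · have hlt : (k : ℝ) + 1 ≤ e := by exact_mod_cast Nat.lt_of_le_of_ne hk hke
      exact tendsto_sub_mul_tsum_nat_add_rpow_neg_of_one_lt ha (by linarith)
  refine (hlim.comp (tendsto_sub_const_nhdsGT _ k)).congr fun s ↦ ?_
  simp only [Function.comp_apply, sub_sub_sub_cancel_right]

end HurwitzSeries

section PolynomialCoefficients

open Polynomial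

theorem eval_mul_rpow_neg_eq_sum (p : ℝ[X]) {x : ℝ} (hx : 0 < x) (s : ℝ) :
    p.eval x * x ^ (-s) = ∑ k ∈ Finset.range (p.natDegree + 1), p.coeff k * x ^ (-(s - k)) := by
  rw [eval_eq_sum_range, Finset.sum_mul]
  refine Finset.sum_congr rfl fun k _ ↦ ?_
  rw [mul_assoc, ← Real.rpow_natCast, ← Real.rpow_add hx]
  ring_nf

variable {a : ℝ}

theorem tendsto_sub_mul_tsum_eval_nat_add_mul_rpow_neg (p : ℝ[X]) (ha : 0 < a) :
    Tendsto (fun s : ℝ ↦ (s - (p.natDegree + 1)) *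
        ∑' n : ℕ, p.eval ((n : ℝ) + a) * ((n : ℝ) + a) ^ (-s))
      (𝓝[>] ((p.natDegree : ℝ) + 1)) (𝓝 p.leadingCoeff) := by
  set e := p.natDegree
  have hsplit : ∀ s : ℝ, (e : ℝ) + 1 < s →
      (s - (e + 1)) * ∑' n : ℕ, p.eval ((n : ℝ) + a) * ((n : ℝ) + a) ^ (-s) =
        ∑ k ∈ Finset.range (e + 1),
          p.coeff k * ((s - (e + 1)) * ∑' n : ℕ, ((n : ℝ) + a) ^ (-(s - k))) := by
    intro s hs
    have hsum : ∀ k ∈ Finset.range (e + 1),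
        Summable fun n : ℕ ↦ p.coeff k * ((n : ℝ) + a) ^ (-(s - k)) := by
      intro k hk
      have hke : (k : ℝ) ≤ e := by exact_mod_cast Finset.mem_range_succ_iff.mp hk
      exact (summable_nat_add_rpow_neg ha (by linarith)).mul_left _
    rw [tsum_congr fun n ↦ eval_mul_rpow_neg_eq_sum p (by positivity) s,
      Summable.tsum_finsetSum hsum, Finset.mul_sum]
    refine Finset.sum_congr rfl fun k _ ↦ ?_
    rw [tsum_mul_left, mul_left_comm]
  have hlim := tendsto_finsetSum (Finset.range (e + 1)) fun k hk ↦
    (tendsto_sub_mul_tsum_nat_add_rpow_neg_sub ha (Finset.mem_range_succ_iff.mp hk)).const_mul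
      (p.coeff k)
  simp only [mul_ite, mul_one, mul_zero, Finset.sum_ite_eq', Finset.mem_range, lt_add_one,
    if_true] at hlim
  exact hlim.congr' (eventually_nhdsWithin_of_forall fun s hs ↦ (hsplit s hs).symm)

theorem tendsto_sub_mul_tsum_eval_nat_mul_rpow_neg (p : ℝ[X]) (ha : 0 < a) :
    Tendsto (fun s : ℝ ↦ (s - (p.natDegree + 1)) *
        ∑' n : ℕ, p.eval (n : ℝ) * ((n : ℝ) + a) ^ (-s))
      (𝓝[>] ((p.natDegree : ℝ) + 1)) (𝓝 p.leadingCoeff) := by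
  have hdeg : (p.comp (X - C a)).natDegree = p.natDegree := by
    rw [natDegree_comp, natDegree_X_sub_C, mul_one]
  have hlead : (p.comp (X - C a)).leadingCoeff = p.leadingCoeff := by
    rw [leadingCoeff_comp (by rw [natDegree_X_sub_C]; exact one_ne_zero), leadingCoeff_X_sub_C,
      one_pow, mul_one]
  have h := tendsto_sub_mul_tsum_eval_nat_add_mul_rpow_neg (p.comp (X - C a)) ha
  simp only [hdeg, hlead, eval_comp, eval_sub, eval_X, eval_C, add_sub_cancel_right] at h
  exact h

end PolynomialCoefficients

open Filter Topology in
/-- The Barnes zeta function `ζ_B(s,a) = ∑_{n≥0} C(d+n−1,n)(n+a)^{−s}` has residue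
`1/(d−1)!` at `s = d`: `lim_{s→d⁺} (s−d) ζ_B(s,a) = 1/(d−1)!`. -/
theorem barnes_zeta_residue_at_d (d : ℕ) (hd : 1 ≤ d) (a : ℝ) (ha : 0 < a) :
    Tendsto (fun s : ℝ =>
        (s - d) * ∑' n : ℕ, ((d + n - 1).choose n : ℝ) * ((n : ℝ) + a) ^ (-s))
      (𝓝[>] (d : ℝ)) (𝓝 (1 / (d - 1).factorial)) := by
  obtain ⟨e, rfl⟩ : ∃ e, d = e + 1 := ⟨d - 1, by omega⟩
  have hchoose : ∀ n : ℕ,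
      ((e + 1 + n - 1).choose n : ℝ) = (Polynomial.preHilbertPoly ℝ e 0).eval (n : ℝ) := by
    intro n
    rw [Polynomial.preHilbertPoly_eq_choose_sub_add ℝ e n.zero_le, Nat.sub_zero,
      show e + 1 + n - 1 = n + e by omega, Nat.choose_symm_add]
  have h := tendsto_sub_mul_tsum_eval_nat_mul_rpow_neg (Polynomial.preHilbertPoly ℝ e 0) ha
  rw [Polynomial.natDegree_preHilbertPoly, Polynomial.leadingCoeff_preHilbertPoly] at h
  rw [Nat.cast_add_one, Nat.add_sub_cancel, one_div]
  simpa only [hchoose] using h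
end

section
/- The Barnes zeta function ζ_B(s,a) for dimension d ≥ 2 has residue (d−2a)/(2(d−2)!) at s = d−1. -/
open Filter Topology Complex Finset Polynomial HurwitzZeta
open scoped Nat

/-!
Since `(n + 1)(n + 2) ⋯ (n + d - 1) = (d - 1)! C(d + n - 1, n)`, the Barnes series is `1 / (d - 1)!`
times `∑ₙ Q(n + a) (n + a)^{-s}` with `Q(x) = ∏_{j=1}^{d-1} (x + j - a)`. Writing `Q = ∑ₖ qₖ xᵏ`
turns this into `∑ₖ qₖ ζ(s - k, a)`, a finite combination of shifted Hurwitz zeta functions. Each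
has a single simple pole, with residue 1, so the residue at `s = k + 1` is `qₖ / (d - 1)!`.
For `s = d - 1` this involves the subleading coefficient
`q_{d-2} = ∑_{j=1}^{d-1} (j - a) = (d - 1)(d - 2a) / 2`.
-/

lemma exists_nat_add_mem_Ioc {a : ℝ} (ha : 0 < a) :
    ∃ (m : ℕ) (b : ℝ), b ∈ Set.Ioc 0 1 ∧ a = m + b := by
  have hceil : 1 ≤ ⌈a⌉₊ := Nat.one_le_iff_ne_zero.mpr (Nat.ceil_pos.mpr ha).ne'
  refine ⟨⌈a⌉₊ - 1, a - (⌈a⌉₊ - 1 : ℕ), ⟨?_, ?_⟩, by ring⟩ <;> rw [Nat.cast_sub hceil] <;>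
    push_cast
  · linarith [Nat.ceil_lt_add_one ha.le]
  · linarith [Nat.le_ceil a]

lemma natCast_add_ofReal_ne_zero (n : ℕ) {a : ℝ} (ha : 0 < a) : (n : ℂ) + a ≠ 0 := by
  have : (0 : ℝ) < n + a := by positivity
  exact_mod_cast this.ne'

lemma differentiable_sum_range_cpow_neg (m : ℕ) {b : ℝ} (hb : 0 < b) :
    Differentiable ℂ fun s : ℂ => ∑ n ∈ range m, ((n : ℂ) + b) ^ (-s) :=
  Differentiable.fun_sum fun n _ =>
    differentiable_neg.const_cpow (Or.inl (natCast_add_ofReal_ne_zero n hb))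

/-- `hurwitzZeta b` is given by the series `∑ (n + b)^{-s}` only for `b ∈ [0, 1]`; for `a = m + b`
drop the first `m` terms of that series. -/
lemma exists_hurwitzZeta_of_pos {a : ℝ} (ha : 0 < a) :
    ∃ B : ℂ → ℂ, (∀ s ≠ 1, DifferentiableAt ℂ B s) ∧
      (∀ s : ℂ, 1 < s.re → HasSum (fun n : ℕ => ((n : ℂ) + a) ^ (-s)) (B s)) ∧
      Tendsto (fun s => (s - 1) * B s) (𝓝[≠] 1) (𝓝 1) := by
  obtain ⟨m, b, ⟨hb0, hb1⟩, rfl⟩ := exists_nat_add_mem_Ioc ha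
  set F := fun s : ℂ => ∑ n ∈ range m, ((n : ℂ) + b) ^ (-s)
  have hF : Differentiable ℂ F := differentiable_sum_range_cpow_neg m hb0
  refine ⟨fun s => hurwitzZeta b s - F s,
    fun s hs => (differentiableAt_hurwitzZeta _ hs).sub (hF s), fun s hs => ?_, ?_⟩
  · have h := (hasSum_nat_add_iff' m).mpr (hasSum_hurwitzZeta_of_one_lt_re ⟨hb0.le, hb1⟩ hs)
    have hshift : ∀ n : ℕ,
        1 / (((n + m : ℕ) : ℂ) + b) ^ s = ((n : ℂ) + ((m + b : ℝ) : ℂ)) ^ (-s) := by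
      intro n
      push_cast
      rw [cpow_neg, one_div, add_right_comm, add_assoc, add_comm (b : ℂ)]
    simp only [hshift] at h
    simpa [F, cpow_neg] using h
  · have hF1 : Tendsto (fun s => (s - 1) * F s) (𝓝[≠] 1) (𝓝 0) := by
      have hcont : Continuous fun s => (s - 1) * F s :=
        (continuous_id.sub continuous_const).mul hF.continuous
      simpa using (hcont.tendsto 1).mono_left nhdsWithin_le_nhds
    simpa [mul_sub] using (hurwitzZeta_residue_one b).sub hF1

/-- If `B s = ∑ₙ (n + a)^{-s}`, then `polyTwist B Q s = ∑ₙ Q(n + a) (n + a)^{-s}`. -/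
noncomputable def polyTwist (B : ℂ → ℂ) (Q : ℂ[X]) (s : ℂ) : ℂ :=
  ∑ k ∈ range (Q.natDegree + 1), Q.coeff k * B (s - k)

section polyTwist

variable {B : ℂ → ℂ} (Q : ℂ[X])

lemma differentiableAt_polyTwist (hB : ∀ s ≠ 1, DifferentiableAt ℂ B s) {s : ℂ}
    (hs : ∀ k ≤ Q.natDegree, s ≠ k + 1) : DifferentiableAt ℂ (polyTwist B Q) s := by
  refine DifferentiableAt.fun_sum fun k hk => DifferentiableAt.const_mul ?_ _
  refine (hB _ fun h => hs k (Nat.lt_succ_iff.mp (mem_range.mp hk)) ?_).comp s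
    (differentiableAt_id.sub_const _)
  linear_combination h

lemma hasSum_polyTwist {a : ℂ} (ha : ∀ n : ℕ, (n : ℂ) + a ≠ 0)
    (hB : ∀ s : ℂ, 1 < s.re → HasSum (fun n : ℕ => ((n : ℂ) + a) ^ (-s)) (B s)) {s : ℂ}
    (hs : Q.natDegree + 1 < s.re) :
    HasSum (fun n : ℕ => Q.eval ((n : ℂ) + a) * ((n : ℂ) + a) ^ (-s)) (polyTwist B Q s) := by
  have hterm : ∀ k ∈ range (Q.natDegree + 1),
      HasSum (fun n : ℕ => Q.coeff k * ((n : ℂ) + a) ^ k * ((n : ℂ) + a) ^ (-s))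
        (Q.coeff k * B (s - k)) := by
    intro k hk
    have hk' : (k : ℝ) ≤ Q.natDegree := by exact_mod_cast Nat.lt_succ_iff.mp (mem_range.mp hk)
    refine ((hB (s - k) (by simp only [sub_re, natCast_re]; linarith)).mul_left
      (Q.coeff k)).congr_fun fun n => ?_
    rw [mul_assoc, neg_sub, sub_eq_add_neg, cpow_add _ _ (ha n), cpow_natCast]
  refine (hasSum_sum hterm).congr_fun fun n => ?_
  rw [eval_eq_sum_range, sum_mul]

lemma tendsto_sub_mul_polyTwist (hBd : ∀ s ≠ 1, DifferentiableAt ℂ B s)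
    (hBres : Tendsto (fun s => (s - 1) * B s) (𝓝[≠] 1) (𝓝 1)) (k : ℕ) :
    Tendsto (fun s => (s - (k + 1)) * polyTwist B Q s) (𝓝[≠] ((k : ℂ) + 1)) (𝓝 (Q.coeff k)) := by
  have hpole : Tendsto (fun s => (s - (k + 1)) * B (s - k)) (𝓝[≠] ((k : ℂ) + 1)) (𝓝 1) := by
    have hshift : Tendsto (· - (k : ℂ)) (𝓝[≠] ((k : ℂ) + 1)) (𝓝[≠] 1) := by
      have h := map_subRight_nhdsNE (c := (k : ℂ)) (a := (k : ℂ) + 1)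
      rw [add_sub_cancel_left] at h
      exact h.le
    convert hBres.comp hshift using 2 with s
    simp only [Function.comp_apply]
    ring
  have hregular : ∀ j ≠ k,
      Tendsto (fun s => (s - (k + 1)) * B (s - j)) (𝓝[≠] ((k : ℂ) + 1)) (𝓝 0) := by
    intro j hj
    have hne : (k : ℂ) + 1 - j ≠ 1 := fun h =>
      hj (by exact_mod_cast (by linear_combination -h : (j : ℂ) = k))
    have hcont : ContinuousAt (fun s => (s - (k + 1)) * B (s - j)) ((k : ℂ) + 1) :=
      (continuousAt_id.sub continuousAt_const).mul
        ((hBd _ hne).comp ((k : ℂ) + 1) (differentiableAt_id.sub_const (j : ℂ))).continuousAt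
    simpa using hcont.tendsto.mono_left nhdsWithin_le_nhds
  have hterm : ∀ j ∈ range (Q.natDegree + 1),
      Tendsto (fun s => Q.coeff j * ((s - (k + 1)) * B (s - j))) (𝓝[≠] ((k : ℂ) + 1))
        (𝓝 (if j = k then Q.coeff k else 0)) := by
    intro j _
    split_ifs with hj
    · subst hj
      simpa using hpole.const_mul (Q.coeff j)
    · simpa using (hregular j hj).const_mul (Q.coeff j)
  have hsum : ∑ j ∈ range (Q.natDegree + 1), (if j = k then Q.coeff k else 0) = Q.coeff k := by
    rw [sum_ite_eq']
    split_ifs with hk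
    · rfl
    · exact (coeff_eq_zero_of_natDegree_lt (by simpa using hk)).symm
  rw [← hsum]
  convert tendsto_finsetSum _ hterm using 2 with s
  simp only [polyTwist, mul_sum]
  exact sum_congr rfl fun j _ => by ring

end polyTwist

noncomputable def barnesPoly (d : ℕ) (a : ℂ) : ℂ[X] :=
  ∏ j ∈ range (d - 1), (X - C (a - (j + 1)))

lemma natDegree_barnesPoly (d : ℕ) (a : ℂ) : (barnesPoly d a).natDegree = d - 1 := by
  rw [barnesPoly, natDegree_finsetProd_X_sub_C_eq_card, card_range]

lemma eval_barnesPoly {d : ℕ} (hd : 1 ≤ d) (a : ℂ) (n : ℕ) :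
    (barnesPoly d a).eval ((n : ℂ) + a) = (d - 1)! * (d + n - 1).choose n := by
  have hnat : ∏ j ∈ range (d - 1), (n + 1 + j) = (d - 1)! * (d + n - 1).choose n := by
    rw [← Nat.ascFactorial_eq_prod_range, Nat.ascFactorial_eq_factorial_mul_choose,
      ← Nat.choose_symm_add, show n + (d - 1) = d + n - 1 by omega]
  have hfactor : ∀ j ∈ range (d - 1),
      (X - C (a - (j + 1))).eval ((n : ℂ) + a) = ((n + 1 + j : ℕ) : ℂ) :=
    fun j _ => by simp only [eval_sub, eval_X, eval_C]; push_cast; ring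
  rw [barnesPoly, eval_prod, prod_congr rfl hfactor]
  exact_mod_cast hnat

lemma coeff_barnesPoly_div_factorial {d : ℕ} (hd : 2 ≤ d) (a : ℂ) :
    (barnesPoly d a).coeff (d - 2) / (d - 1)! = (d - 2 * a) / (2 * (d - 2)!) := by
  obtain ⟨e, rfl⟩ : ∃ e, d = e + 2 := ⟨d - 2, by omega⟩
  have hcoeff : (barnesPoly (e + 2) a).coeff e = ∑ j ∈ range (e + 1), ((j : ℂ) + 1 - a) := by
    have h := nextCoeff_of_natDegree_pos (p := barnesPoly (e + 2) a)
      (by rw [natDegree_barnesPoly]; omega)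
    rw [natDegree_barnesPoly, barnesPoly, prod_X_sub_C_nextCoeff] at h
    simpa [sum_neg_distrib, barnesPoly] using h.symm
  have hgauss : (∑ j ∈ range (e + 1), (j : ℂ)) * 2 = ((e : ℂ) + 1) * e := by
    have h := sum_range_id_mul_two (e + 1)
    rw [Nat.add_sub_cancel] at h
    simpa using congrArg (Nat.cast (R := ℂ)) h
  rw [show e + 2 - 2 = e by omega, show e + 2 - 1 = e + 1 by omega, hcoeff, sum_sub_distrib,
    sum_add_distrib, Nat.factorial_succ]
  simp only [sum_const, card_range, nsmul_eq_mul]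
  have hfac : (e ! : ℂ) ≠ 0 := Nat.cast_ne_zero.mpr (Nat.factorial_ne_zero e)
  rw [div_eq_div_iff (by push_cast; exact mul_ne_zero (by norm_cast) hfac)
    (mul_ne_zero two_ne_zero hfac)]
  push_cast
  linear_combination (e ! : ℂ) * hgauss

lemma ne_natCast_add_one_of_mem {d : ℕ} {s : ℂ}
    (hs : s ∈ {z : ℂ | (d : ℝ) - 2 < z.re} \ {(d : ℂ), (d : ℂ) - 1}) {k : ℕ} (hk : k < d) :
    s ≠ k + 1 := by
  rintro rfl
  obtain ⟨hre, hne⟩ := hs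
  simp only [Set.mem_ofPred_eq, add_re, natCast_re, one_re] at hre
  have hdk : d < k + 3 := by exact_mod_cast (by linarith : (d : ℝ) < k + 3)
  rcases (by omega : d = k + 2 ∨ d = k + 1) with rfl | rfl
  · exact hne (Or.inr (Set.mem_singleton_iff.mpr (by push_cast; ring)))
  · exact hne (Or.inl (by push_cast; ring))

open Filter Topology in
/-- The meromorphic continuation of the Barnes zeta function
`ζ_B(s,a) = ∑_{n≥0} C(d+n−1,n)(n+a)^{−s}` (for `d ≥ 2`, `a > 0`) has residue
`(d−2a)/(2(d−2)!)` at `s = d−1`: there is an analytic function on a connected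
neighbourhood region `{Re s > d−2} \ {d, d−1}` agreeing with the series for
`Re s > d` whose product with `(s−(d−1))` tends to `(d−2a)/(2(d−2)!)`. -/
theorem barnes_zeta_residue_at_d_sub_one (d : ℕ) (hd : 2 ≤ d) (a : ℝ) (ha : 0 < a) :
    ∃ g : ℂ → ℂ,
      AnalyticOnNhd ℂ g ({z : ℂ | (d : ℝ) - 2 < z.re} \ {(d : ℂ), (d : ℂ) - 1}) ∧
      (∀ s : ℂ, (d : ℝ) < s.re →
        g s = ∑' n : ℕ, ((d + n - 1).choose n : ℂ) * ((n : ℂ) + a) ^ (-s)) ∧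
      Tendsto (fun s : ℂ => (s - ((d : ℂ) - 1)) * g s)
        (𝓝[≠] ((d : ℂ) - 1))
        (𝓝 (((d : ℂ) - 2 * a) / (2 * (d - 2).factorial))) := by
  obtain ⟨B, hBd, hBsum, hBres⟩ := exists_hurwitzZeta_of_pos ha
  set Q := barnesPoly d a
  have hdeg : Q.natDegree = d - 1 := natDegree_barnesPoly d a
  refine ⟨fun s => polyTwist B Q s / (d - 1)!, ?_, fun s hs => ?_, ?_⟩
  · refine DifferentiableOn.analyticOnNhd (fun s hs => ?_)
      ((isOpen_lt continuous_const continuous_re).sdiff (Set.toFinite _).isClosed)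
    exact ((differentiableAt_polyTwist Q hBd fun k hk =>
      ne_natCast_add_one_of_mem hs (by omega)).div_const _).differentiableWithinAt
  · have hdeg' : (Q.natDegree : ℝ) + 1 ≤ d := by rw [hdeg]; norm_cast; omega
    have h := (hasSum_polyTwist Q (natCast_add_ofReal_ne_zero · ha) hBsum
      (by linarith)).div_const ((d - 1)! : ℂ)
    refine (h.congr_fun fun n => ?_).tsum_eq.symm
    have hfac : ((d - 1)! : ℂ) ≠ 0 := Nat.cast_ne_zero.mpr (Nat.factorial_ne_zero _)
    rw [eval_barnesPoly (by omega)]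
    field_simp
  · have h := (tendsto_sub_mul_polyTwist Q hBd hBres (d - 2)).div_const ((d - 1)! : ℂ)
    rw [coeff_barnesPoly_div_factorial hd, show ((d - 2 : ℕ) : ℂ) + 1 = d - 1 by
      rw [Nat.cast_sub hd]; ring] at h
    simpa only [mul_div_assoc] using h
end
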